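/- Let N be an odd positive integer and suppose unitaries U_T on ℂ^N satisfy U_T·A(v)·U_T† = A(T(v)) for all v ∈ (ZMod N)² and all T in the Margulis set 𝒮. Let Λ_N(ρ) = (1/8)·Σ_{T∈𝒮} U_T·ρ·U_T† and let M_N be the classical Margulis walk operator on functions f : (ZMod N)² → ℂ, (M_N f)(v) = (1/8)·Σ_{T∈𝒮} f(T⁻¹(v)). Then the linear bijection X ↦ W_X from N×N matrices to functions on (ZMod N)² intertwines Λ_N and M_N (that is, W_{Λ_N(X)} = M_N(W_X) for all X); consequently the linear endomorphism Λ_N of the matrix space and the linear endomorphism M_N have exactly the same eigenvalues. -/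

import Mathlib

open Matrix BigOperators

noncomputable section

/-- `ω = exp(2πi/N)`, a primitive `N`-th root of unity. -/
def omegaN (N : ℕ) : ℂ := Complex.exp (2 * Real.pi * Complex.I / N)

/-- The shift operator `x(q)|k⟩ = |k+q⟩`. -/
def shiftOp (N : ℕ) [NeZero N] (q : ZMod N) : Matrix (ZMod N) (ZMod N) ℂ :=
  Matrix.of fun k l => if k = l + q then 1 else 0

/-- The boost operator `z(p)|k⟩ = ω^{pk}|k⟩`. -/
def boostOp (N : ℕ) [NeZero N] (p : ZMod N) : Matrix (ZMod N) (ZMod N) ℂ :=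
  Matrix.diagonal fun k => omegaN N ^ (p * k).val

/-- The Weyl operator `w(p,q) = ω^{−2⁻¹pq} z(p) x(q)`. -/
def weylOp (N : ℕ) [NeZero N] (p q : ZMod N) : Matrix (ZMod N) (ZMod N) ℂ :=
  omegaN N ^ ((-(2⁻¹ : ZMod N) * p * q).val) • (boostOp N p * shiftOp N q)

/-- The parity operator `A(0,0)|x⟩ = |−x⟩`. -/
def parityOp (N : ℕ) [NeZero N] : Matrix (ZMod N) (ZMod N) ℂ :=
  Matrix.of fun k l => if k = -l then 1 else 0

/-- The phase space operators `A(p,q) = w(p,q) A(0,0) w(p,q)†`. -/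
def phaseOp (N : ℕ) [NeZero N] (a : ZMod N × ZMod N) : Matrix (ZMod N) (ZMod N) ℂ :=
  weylOp N a.1 a.2 * parityOp N * (weylOp N a.1 a.2)ᴴ

/-- The discrete Wigner function `W_X(v) = (1/N)·tr(A(v)·X)`. -/
def wigner (N : ℕ) [NeZero N] (X : Matrix (ZMod N) (ZMod N) ℂ) (v : ZMod N × ZMod N) : ℂ :=
  (1 / (N : ℂ)) * (phaseOp N v * X).trace

/-- The eight Margulis transformations, over any commutative ring.
Indices 0–3 are `T₁(v) = S₁v`, `T₂(v) = S₁v + (1,0)ᵀ`, `T₃(v) = S₂v`,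
`T₄(v) = S₂v − (0,1)ᵀ` with `S₁ = [[1,2],[0,1]]`, `S₂ = [[1,0],[2,1]]`;
indices 4–7 are their respective inverses. -/
def marg {R : Type*} [CommRing R] : Fin 8 → R × R → R × R
  | 0 => fun v => (v.1 + 2 * v.2, v.2)
  | 1 => fun v => (v.1 + 2 * v.2 + 1, v.2)
  | 2 => fun v => (v.1, v.2 + 2 * v.1)
  | 3 => fun v => (v.1, v.2 + 2 * v.1 - 1)
  | 4 => fun v => (v.1 - 2 * v.2, v.2)
  | 5 => fun v => (v.1 - 2 * v.2 - 1, v.2)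
  | 6 => fun v => (v.1, v.2 - 2 * v.1)
  | 7 => fun v => (v.1, v.2 - 2 * v.1 + 1)

/-- The inverse of the `i`-th Margulis transformation (the family is closed under
inverses: `marg (i+4)` is the inverse of `marg i`). -/
def margInv {R : Type*} [CommRing R] (i : Fin 8) : R × R → R × R := marg (i + 4)

/-- The classical Margulis walk operator on functions `(ZMod N)² → ℂ`:
`(M_N f)(v) = (1/8)·Σ_T f(T⁻¹(v))`. -/
def margWalk (N : ℕ) (f : ZMod N × ZMod N → ℂ) : ZMod N × ZMod N → ℂ :=
  fun v => (1 / 8 : ℂ) * ∑ i : Fin 8, f (margInv i v)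
/-!
In the coordinates `k = q + t/2` (available because `N` is odd) the Wigner function reads
`W_X(p, q) = N⁻¹ Σ_t ω^{tp} X(q − t/2, q + t/2)`: a reindexing of the entries of `X` by the
invertible map `(t, q) ↦ (q − t/2, q + t/2)` followed by an inverse discrete Fourier transform in
`t`. Hence `X ↦ W_X` is a linear isomorphism. Covariance and cyclicity of the trace give
`W_{U X U†}(v) = W_X(T⁻¹ v)`, which averaged over the Margulis set is the intertwining relation,
and a linear isomorphism intertwining two maps matches their eigenvectors.
-/

open ZMod (stdAddChar)
open scoped ZMod

section PhaseSpace

variable {N : ℕ} [NeZero N]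

lemma omegaN_pow_val (m : ZMod N) : omegaN N ^ m.val = stdAddChar m := by
  rw [ZMod.stdAddChar_apply, ZMod.toCircle_apply, omegaN, ← Complex.exp_nat_mul]
  congr 1
  ring

lemma star_stdAddChar (m : ZMod N) : star (stdAddChar m) = stdAddChar (-m) := by
  rw [AddChar.map_neg_eq_inv, ZMod.stdAddChar_apply, ← Circle.coe_inv, Circle.coe_inv_eq_conj]
  rfl

lemma weylOp_apply (p q k l : ZMod N) :
    weylOp N p q k l = if k = l + q then stdAddChar (-2⁻¹ * p * q + p * k) else 0 := by
  simp [weylOp, boostOp, shiftOp, omegaN_pow_val, Matrix.diagonal_mul, AddChar.map_add_eq_mul]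

lemma phaseOp_apply (v : ZMod N × ZMod N) (k l : ZMod N) :
    phaseOp N v k l = if k = 2 * v.2 - l then stdAddChar (v.1 * (k - l)) else 0 := by
  obtain ⟨p, q⟩ := v
  have hwP : ∀ j, (weylOp N p q * parityOp N) k j = weylOp N p q k (-j) := by
    simp [Matrix.mul_apply, parityOp]
  have hl : ∀ j, l = j + q ↔ j = l - q := fun j => by rw [eq_sub_iff_add_eq, eq_comm]
  have hk : k = -(l - q) + q ↔ k = 2 * q - l := by constructor <;> rintro rfl <;> ring
  simp only [phaseOp, Matrix.mul_apply, hwP, Matrix.conjTranspose_apply, weylOp_apply,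
    apply_ite star, star_stdAddChar, star_zero, mul_ite, mul_zero, ite_mul, zero_mul, hl,
    Finset.sum_ite_eq', Finset.mem_univ, if_true, hk, ← AddChar.map_add_eq_mul]
  congr 2
  ring

lemma trace_phaseOp_mul (v : ZMod N × ZMod N) (X : Matrix (ZMod N) (ZMod N) ℂ) :
    (phaseOp N v * X).trace =
      ∑ k, stdAddChar (v.1 * (k - (2 * v.2 - k))) * X (2 * v.2 - k) k := by
  have hl : ∀ k l : ZMod N, k = 2 * v.2 - l ↔ l = 2 * v.2 - k := fun k l => by
    constructor <;> rintro rfl <;> ring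
  simp only [Matrix.trace, Matrix.diag_apply, Matrix.mul_apply, phaseOp_apply, hl, ite_mul,
    zero_mul, Finset.sum_ite_eq', Finset.mem_univ, if_true]

end PhaseSpace

def midpointEquiv (R : Type*) [CommRing R] [Invertible (2 : R)] : R × R ≃ R × R where
  toFun x := (x.2 - ⅟2 * x.1, x.2 + ⅟2 * x.1)
  invFun y := (y.2 - y.1, ⅟2 * (y.1 + y.2))
  left_inv x := by
    ext
    · linear_combination x.1 * mul_invOf_self (2 : R)
    · linear_combination x.2 * invOf_mul_self (2 : R)
  right_inv y := by
    ext
    · linear_combination y.1 * invOf_mul_self (2 : R)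
    · linear_combination y.2 * invOf_mul_self (2 : R)

section Wigner

variable {N : ℕ} [NeZero N] [Invertible (2 : ZMod N)]

lemma wigner_apply_eq_sum (X : Matrix (ZMod N) (ZMod N) ℂ) (v : ZMod N × ZMod N) :
    wigner N X v =
      (N : ℂ)⁻¹ * ∑ t, stdAddChar (t * v.1) * X (v.2 - ⅟2 * t) (v.2 + ⅟2 * t) := by
  let e : ZMod N ≃ ZMod N :=
    (Units.mulLeft (unitOfInvertible (⅟2 : ZMod N))).trans (Equiv.addLeft v.2)
  have he : ∀ t, e t = v.2 + ⅟2 * t := fun t => rfl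
  rw [wigner, trace_phaseOp_mul, one_div, ← e.sum_comp]
  simp only [he]
  congr 1
  refine Finset.sum_congr rfl fun t _ => ?_
  congr 2
  · linear_combination (v.1 * t) * invOf_mul_self (2 : ZMod N)
  · ring

variable (N) in
def wignerEquiv : Matrix (ZMod N) (ZMod N) ℂ ≃ₗ[ℂ] (ZMod N × ZMod N → ℂ) :=
  (Matrix.ofLinearEquiv ℂ).symm ≪≫ₗ (LinearEquiv.curry ℂ ℂ (ZMod N) (ZMod N)).symm ≪≫ₗ
    LinearEquiv.funCongrLeft ℂ ℂ (midpointEquiv (ZMod N)) ≪≫ₗ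
    LinearEquiv.curry ℂ ℂ (ZMod N) (ZMod N) ≪≫ₗ 𝓕⁻ ≪≫ₗ
    (LinearEquiv.curry ℂ ℂ (ZMod N) (ZMod N)).symm

lemma coe_wignerEquiv : ⇑(wignerEquiv N) = wigner N := by
  funext X ⟨p, q⟩
  simp [wignerEquiv, wigner_apply_eq_sum, ZMod.invDFT_apply, midpointEquiv, LinearMap.funLeft,
    Finset.sum_apply]

end Wigner

lemma Unitary.star_mul_mul_eq_of_mul_mul_star_eq {R : Type*} [Monoid R] [StarMul R] {U : R}
    (hU : U ∈ unitary R) {a b : R} (h : U * a * star U = b) : star U * b * U = a := by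
  rw [← h]
  simp only [mul_assoc, Unitary.star_mul_self_of_mem hU, mul_one]
  rw [← mul_assoc, Unitary.star_mul_self_of_mem hU, one_mul]

lemma Matrix.trace_mul_unitary_conj {n ι α : Type*} [Fintype n] [DecidableEq n] [CommRing α]
    [StarRing α] {U : Matrix n n α} (hU : U ∈ Matrix.unitaryGroup n α) {A : ι → Matrix n n α}
    {T T' : ι → ι} (hT : Function.LeftInverse T T') (hcov : ∀ v, U * A v * Uᴴ = A (T v))
    (X : Matrix n n α) (v : ι) :
    (A v * (U * X * Uᴴ)).trace = (A (T' v) * X).trace := by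
  have hconj : Uᴴ * A v * U = A (T' v) :=
    Unitary.star_mul_mul_eq_of_mul_mul_star_eq hU ((hcov (T' v)).trans (congrArg A (hT v)))
  rw [← hconj, ← Matrix.mul_assoc, Matrix.trace_mul_comm]
  simp only [Matrix.mul_assoc]

lemma leftInverse_marg_margInv {R : Type*} [CommRing R] (i : Fin 8) :
    Function.LeftInverse (marg i) (margInv i : R × R → R × R) := by
  intro v
  fin_cases i <;> ext <;> simp [marg, margInv] <;> ring

lemma wigner_margulisChannel {N : ℕ} [NeZero N] {U : Fin 8 → Matrix (ZMod N) (ZMod N) ℂ}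
    (hU : ∀ i, U i ∈ Matrix.unitaryGroup (ZMod N) ℂ)
    (hcov : ∀ i (v : ZMod N × ZMod N), U i * phaseOp N v * (U i)ᴴ = phaseOp N (marg i v))
    (X : Matrix (ZMod N) (ZMod N) ℂ) :
    wigner N ((1 / 8 : ℂ) • ∑ i : Fin 8, U i * X * (U i)ᴴ) = margWalk N (wigner N X) := by
  funext v
  simp only [wigner, margWalk, Matrix.mul_smul, Matrix.trace_smul, Matrix.trace_sum, smul_eq_mul,
    Finset.mul_sum, Matrix.trace_mul_unitary_conj (hU _) (leftInverse_marg_margInv _) (hcov _)]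
  exact Finset.sum_congr rfl fun i _ => by ring

theorem LinearEquiv.exists_eigenvector_iff_of_semiconj {R M M' : Type*} [Semiring R]
    [AddCommMonoid M] [AddCommMonoid M'] [Module R M] [Module R M'] (e : M ≃ₗ[R] M')
    {f : M → M} {g : M' → M'} (h : Function.Semiconj e f g) (c : R) :
    (∃ x, x ≠ 0 ∧ f x = c • x) ↔ (∃ y, y ≠ 0 ∧ g y = c • y) := by
  constructor
  · rintro ⟨x, hx, hfx⟩
    exact ⟨e x, by simpa using hx, by rw [← h, hfx, map_smul]⟩
  · rintro ⟨y, hy, hgy⟩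
    refine ⟨e.symm y, by simpa using hy, e.injective ?_⟩
    rw [h, e.apply_symm_apply, hgy, map_smul, e.apply_symm_apply]

/-- the (bijective) map `X ↦ W_X` intertwines the quantum Margulis channel
`Λ_N` with the classical walk operator `M_N`; consequently `Λ_N` and `M_N` have exactly
the same eigenvalues. -/
theorem quantum_margulis_intertwine_and_spectrum (N : ℕ) [NeZero N] (hN : Odd N)
    (U : Fin 8 → Matrix (ZMod N) (ZMod N) ℂ)
    (hU : ∀ i, U i ∈ Matrix.unitaryGroup (ZMod N) ℂ)
    (hcov : ∀ i (v : ZMod N × ZMod N), U i * phaseOp N v * (U i)ᴴ = phaseOp N (marg i v)) :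
    Function.Bijective (fun X : Matrix (ZMod N) (ZMod N) ℂ => wigner N X)
    ∧ (∀ X : Matrix (ZMod N) (ZMod N) ℂ,
        wigner N ((1 / 8 : ℂ) • ∑ i : Fin 8, U i * X * (U i)ᴴ) = margWalk N (wigner N X))
    ∧ (∀ c : ℂ,
        (∃ X : Matrix (ZMod N) (ZMod N) ℂ, X ≠ 0 ∧
            (1 / 8 : ℂ) • ∑ i : Fin 8, U i * X * (U i)ᴴ = c • X)
        ↔ (∃ f : ZMod N × ZMod N → ℂ, f ≠ 0 ∧ margWalk N f = c • f)) := by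
  have : Invertible (2 : ZMod N) :=
    ((ZMod.isUnit_iff_coprime 2 N).mpr hN.coprime_two_left).invertible
  have hW : ⇑(wignerEquiv N) = wigner N := coe_wignerEquiv
  have hintertwine := wigner_margulisChannel hU hcov
  refine ⟨hW ▸ (wignerEquiv N).bijective, hintertwine, ?_⟩
  exact (wignerEquiv N).exists_eigenvector_iff_of_semiconj (hW ▸ hintertwine)
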